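/- For complex θ = e^ξ with |Im ξ| < π/4, |ξ| < ξ₀ < 1/2, and ψ ∈ L²(ℝ⁶): ‖θ T_θ ψ‖² ≥ (1-ξ₀)² ∫ (|p₁| + |p₂|)² |ψ̂(p₁,p₂)|² dp₁dp₂, where T_θ is multiplication by θ^{-1}(√(p₁² + m²θ²) + √(p₂² + m²θ²)) in momentum space. -/

import Mathlib

/-!
Since `|Im ξ| < π/4`, the argument of `m²θ²` lies in `[-π/2, π/2]`, so `Re (q² + m²θ²) ≥ q²` and hence
`Re √(q² + m²θ²) ≥ q` for the principal root. The multiplier therefore has real part, and a fortiori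
modulus, at least `|p₁| + |p₂|`; the factor `(1 - ξ₀)² ≤ 1` only weakens the bound.
-/

open MeasureTheory

namespace Complex

lemma le_re_cpow_half {z : ℂ} {p : ℝ} (hz : p ^ 2 ≤ z.re) :
    p ≤ (z ^ ((1 : ℂ) / 2)).re := by
  rw [one_div, cpow_inv_two_re]
  exact Real.le_sqrt_of_sq_le (by linarith [re_le_norm z])

lemma le_re_cpow_half_sq_add {c : ℂ} (hc : 0 ≤ c.re) (q : ℝ) :
    q ≤ (((q : ℂ) ^ 2 + c) ^ ((1 : ℂ) / 2)).re :=
  le_re_cpow_half (by simpa [← ofReal_pow] using hc)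

lemma re_exp_sq_nonneg {ξ : ℂ} (hξ : |ξ.im| ≤ Real.pi / 4) : 0 ≤ (exp ξ ^ 2).re := by
  rw [← exp_nat_mul, exp_re]
  have him : ((2 : ℕ) * ξ).im = 2 * ξ.im := by simp
  have hcos : 0 ≤ Real.cos ((2 : ℕ) * ξ).im := by
    rw [him]
    apply Real.cos_nonneg_of_mem_Icc
    constructor <;> linarith [abs_le.mp hξ]
  positivity

lemma sq_mul_norm_sq_le_norm_mul_sq {M : ℂ} {a : ℝ} (ha : 0 ≤ a) (h : a ≤ M.re) (x : ℂ) :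
    a ^ 2 * ‖x‖ ^ 2 ≤ ‖M * x‖ ^ 2 := by
  have haM : a ≤ ‖M‖ := h.trans (re_le_norm M)
  rw [norm_mul, mul_pow]
  gcongr

end Complex

open Complex in
theorem stmt_10_general (ξ₀ m : ℝ) (ξ : ℂ) (h0 : 0 < ξ₀) (h1 : ξ₀ < 1/2)
    (h3 : |ξ.im| < Real.pi / 4)
    (θ : ℂ) (hθ : θ = Complex.exp ξ)
    (ψ : EuclideanSpace ℝ (Fin 3) × EuclideanSpace ℝ (Fin 3) → ℂ)
    (hint : Integrable (fun p : EuclideanSpace ℝ (Fin 3) × EuclideanSpace ℝ (Fin 3) =>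
      ‖((((‖p.1‖ : ℝ) : ℂ) ^ 2 + (m : ℂ) ^ 2 * θ ^ 2) ^ ((1 : ℂ) / 2) +
        (((‖p.2‖ : ℝ) : ℂ) ^ 2 + (m : ℂ) ^ 2 * θ ^ 2) ^ ((1 : ℂ) / 2)) * ψ p‖ ^ 2)) :
    (1 - ξ₀) ^ 2 * ∫ p : EuclideanSpace ℝ (Fin 3) × EuclideanSpace ℝ (Fin 3),
        (‖p.1‖ + ‖p.2‖) ^ 2 * ‖ψ p‖ ^ 2 ≤
    ∫ p : EuclideanSpace ℝ (Fin 3) × EuclideanSpace ℝ (Fin 3),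
      ‖((((‖p.1‖ : ℝ) : ℂ) ^ 2 + (m : ℂ) ^ 2 * θ ^ 2) ^ ((1 : ℂ) / 2) +
        (((‖p.2‖ : ℝ) : ℂ) ^ 2 + (m : ℂ) ^ 2 * θ ^ 2) ^ ((1 : ℂ) / 2)) * ψ p‖ ^ 2 := by
  have hmass : 0 ≤ ((m : ℂ) ^ 2 * θ ^ 2).re := by
    rw [← ofReal_pow, re_ofReal_mul, hθ]
    exact mul_nonneg (sq_nonneg m) (re_exp_sq_nonneg h3.le)
  have hfactor : (1 - ξ₀) ^ 2 ≤ 1 := pow_le_one₀ (by linarith) (by linarith)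
  rw [← integral_const_mul]
  refine integral_mono_of_nonneg (.of_forall fun p => by positivity) hint (.of_forall fun p => ?_)
  have hre := add_le_add (le_re_cpow_half_sq_add hmass ‖p.1‖)
    (le_re_cpow_half_sq_add hmass ‖p.2‖)
  rw [← add_re] at hre
  calc (1 - ξ₀) ^ 2 * ((‖p.1‖ + ‖p.2‖) ^ 2 * ‖ψ p‖ ^ 2)
      ≤ (‖p.1‖ + ‖p.2‖) ^ 2 * ‖ψ p‖ ^ 2 := mul_le_of_le_one_left (by positivity) hfactor
    _ ≤ _ := sq_mul_norm_sq_le_norm_mul_sq (by positivity) hre (ψ p)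

theorem stmt_10 (ξ₀ m : ℝ) (ξ : ℂ) (h0 : 0 < ξ₀) (h1 : ξ₀ < 1/2)
    (h2 : ‖ξ‖ < ξ₀) (h3 : |ξ.im| < Real.pi / 4) (hm : 0 < m)
    (θ : ℂ) (hθ : θ = Complex.exp ξ)
    (ψ : EuclideanSpace ℝ (Fin 3) × EuclideanSpace ℝ (Fin 3) → ℂ)
    (hint : Integrable (fun p : EuclideanSpace ℝ (Fin 3) × EuclideanSpace ℝ (Fin 3) =>
      ‖((((‖p.1‖ : ℝ) : ℂ) ^ 2 + (m : ℂ) ^ 2 * θ ^ 2) ^ ((1 : ℂ) / 2) +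
        (((‖p.2‖ : ℝ) : ℂ) ^ 2 + (m : ℂ) ^ 2 * θ ^ 2) ^ ((1 : ℂ) / 2)) * ψ p‖ ^ 2)) :
    (1 - ξ₀) ^ 2 * ∫ p : EuclideanSpace ℝ (Fin 3) × EuclideanSpace ℝ (Fin 3),
        (‖p.1‖ + ‖p.2‖) ^ 2 * ‖ψ p‖ ^ 2 ≤
    ∫ p : EuclideanSpace ℝ (Fin 3) × EuclideanSpace ℝ (Fin 3),
      ‖((((‖p.1‖ : ℝ) : ℂ) ^ 2 + (m : ℂ) ^ 2 * θ ^ 2) ^ ((1 : ℂ) / 2) +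
        (((‖p.2‖ : ℝ) : ℂ) ^ 2 + (m : ℂ) ^ 2 * θ ^ 2) ^ ((1 : ℂ) / 2)) * ψ p‖ ^ 2 :=
  stmt_10_general ξ₀ m ξ h0 h1 h3 θ hθ ψ hint
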